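/- Thickening preserves the number of logical qubits (k̃ = k): Let H_X ∈ 𝔽₂^{m_X×n} and H_Z ∈ 𝔽₂^{m_Z×n} satisfy H_X·H_Zᵀ = 0, and let ℓ ≥ 1. Then rs(H̃_X) ⊆ ker H̃_Z, rs(H_X) ⊆ ker H_Z, and the 𝔽₂-dimensions of the quotient spaces agree: dim_{𝔽₂}( ker H̃_Z / rs(H̃_X) ) = dim_{𝔽₂}( ker H_Z / rs(H_X) ). Here ker H denotes the kernel of the linear map v ↦ Hv on column vectors, and a row space is viewed inside the same coordinate space via transposition. -/

import Mathlib

open Matrix Kronecker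

/-- The row space of a matrix over 𝔽₂: the span of its rows. -/
def rowSpace {m n : Type*} (A : Matrix m n (ZMod 2)) :
    Submodule (ZMod 2) (n → ZMod 2) :=
  Submodule.span (ZMod 2) (Set.range A)

/-- The reduced weight of a vector `v` relative to a matrix `A`:
`‖v‖_A = min { |v+u| : u ∈ rs(A) }`. -/
noncomputable def redW {m n : Type*} [Fintype n] (A : Matrix m n (ZMod 2))
    (v : n → ZMod 2) : ℕ :=
  sInf {k | ∃ u ∈ rowSpace A, hammingNorm (v + u) = k}

/-- `H` is `(t,f)`-sound relative to `A`. -/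
def Sound {m n a : Type*} [Fintype m] [Fintype n] (t : ℕ) (f : ℕ → ℝ)
    (H : Matrix m n (ZMod 2)) (A : Matrix a n (ZMod 2)) : Prop :=
  ∀ s : m → ZMod 2, (∃ e, H.mulVec e = s) → hammingNorm s ≤ t →
    ∃ e, H.mulVec e = s ∧ (redW A e : ℝ) ≤ f (hammingNorm s)

/-- `H` is `(t,f)`-confined relative to `A`. -/
def Confined {m n a : Type*} [Fintype m] [Fintype n] (t : ℕ) (f : ℕ → ℝ)
    (H : Matrix m n (ZMod 2)) (A : Matrix a n (ZMod 2)) : Prop :=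
  ∀ e : n → ZMod 2, redW A e ≤ t → (redW A e : ℝ) ≤ f (hammingNorm (H.mulVec e))

/-- Parity-check matrix of the length-`ℓ` repetition code. -/
def repH (ℓ : ℕ) : Matrix (Fin (ℓ - 1)) (Fin ℓ) (ZMod 2) :=
  Matrix.of fun j i => if i.val = j.val ∨ i.val = j.val + 1 then 1 else 0

/-- Thickened X-check matrix `H̃_X = ( H_X⊗I_ℓ | I_{m_X}⊗hᵀ )`. -/
def thickHX {mX n : ℕ} (HX : Matrix (Fin mX) (Fin n) (ZMod 2)) (ℓ : ℕ) :
    Matrix (Fin mX × Fin ℓ) ((Fin n × Fin ℓ) ⊕ (Fin mX × Fin (ℓ - 1))) (ZMod 2) :=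
  Matrix.fromCols (HX ⊗ₖ (1 : Matrix (Fin ℓ) (Fin ℓ) (ZMod 2)))
    ((1 : Matrix (Fin mX) (Fin mX) (ZMod 2)) ⊗ₖ (repH ℓ)ᵀ)

/-- Thickened Z-check matrix `H̃_Z = [[ H_Z⊗I_ℓ , 0 ],[ I_n⊗h , H_Xᵀ⊗I_{ℓ−1} ]]`. -/
def thickHZ {mX mZ n : ℕ} (HX : Matrix (Fin mX) (Fin n) (ZMod 2))
    (HZ : Matrix (Fin mZ) (Fin n) (ZMod 2)) (ℓ : ℕ) :
    Matrix ((Fin mZ × Fin ℓ) ⊕ (Fin n × Fin (ℓ - 1)))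
      ((Fin n × Fin ℓ) ⊕ (Fin mX × Fin (ℓ - 1))) (ZMod 2) :=
  Matrix.fromBlocks (HZ ⊗ₖ (1 : Matrix (Fin ℓ) (Fin ℓ) (ZMod 2))) 0
    ((1 : Matrix (Fin n) (Fin n) (ZMod 2)) ⊗ₖ repH ℓ)
    (HXᵀ ⊗ₖ (1 : Matrix (Fin (ℓ - 1)) (Fin (ℓ - 1)) (ZMod 2)))

/-- Metacheck matrix `M̃_Z = ( I_{m_Z}⊗h | H_Z⊗I_{ℓ−1} )`. -/
def metaMZ {mZ n : ℕ} (HZ : Matrix (Fin mZ) (Fin n) (ZMod 2)) (ℓ : ℕ) :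
    Matrix (Fin mZ × Fin (ℓ - 1))
      ((Fin mZ × Fin ℓ) ⊕ (Fin n × Fin (ℓ - 1))) (ZMod 2) :=
  Matrix.fromCols ((1 : Matrix (Fin mZ) (Fin mZ) (ZMod 2)) ⊗ₖ repH ℓ)
    (HZ ⊗ₖ (1 : Matrix (Fin (ℓ - 1)) (Fin (ℓ - 1)) (ZMod 2)))

/-- Sheet-`τ` component of a vector on the thickened qubit space. -/
def sheet {n ℓ mX : ℕ} (τ : Fin ℓ)
    (v : (Fin n × Fin ℓ) ⊕ (Fin mX × Fin (ℓ - 1)) → ZMod 2) : Fin n → ZMod 2 :=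
  fun i => v (Sum.inl (i, τ))

/-! Restricting a thickened vector to sheet `0` and copying a vector onto every sheet (with zero
rung coordinates) map kernels to kernels and row spaces to row spaces, and the first undoes the
second. Conversely, for `v ∈ ker H̃_Z`, the vector `v + spread (sheet 0 v)` is the combination of
the rows of `H̃_X` whose coefficient at `(a, τ)` is the sum of the rung coordinates `v (a, j)`
below sheet `τ`: the rung checks of `H̃_Z` make the sheet coordinates telescope. Hence the two maps
induce mutually inverse isomorphisms of the logical spaces. -/

section
variable {m n m' : Type*}

theorem rowSpace_le_ker_mulVecLin_iff [Fintype n] (A : Matrix m n (ZMod 2))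
    (B : Matrix m' n (ZMod 2)) : rowSpace A ≤ LinearMap.ker B.mulVecLin ↔ B * Aᵀ = 0 := by
  rw [rowSpace, Submodule.span_le, ← Matrix.ext_iff]
  constructor
  · rintro h c a
    exact congrFun (h ⟨a, rfl⟩) c
  · rintro h _ ⟨a, rfl⟩
    exact funext fun c => h c a

theorem mem_rowSpace_iff [Fintype m] {A : Matrix m n (ZMod 2)} {v : n → ZMod 2} :
    v ∈ rowSpace A ↔ ∃ c, c ᵥ* A = v := by
  change v ∈ Submodule.span _ (Set.range A.row) ↔ _
  rw [← range_vecMulLinear]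
  rfl

end

namespace Submodule

variable {R M N : Type*} [Ring R] [AddCommGroup M] [Module R M] [AddCommGroup N] [Module R N]
  {K A : Submodule R M} {K' A' : Submodule R N}

def subquotientEquiv (f : M →ₗ[R] N) (g : N →ₗ[R] M)
    (hfK : ∀ x ∈ K, f x ∈ K') (hfA : ∀ x ∈ A, f x ∈ A')
    (hgK : ∀ y ∈ K', g y ∈ K) (hgA : ∀ y ∈ A', g y ∈ A)
    (hgf : ∀ x ∈ K, g (f x) - x ∈ A) (hfg : ∀ y ∈ K', f (g y) - y ∈ A') :
    (K ⧸ A.comap K.subtype) ≃ₗ[R] (K' ⧸ A'.comap K'.subtype) :=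
  LinearEquiv.ofLinearMap
    (mapQ _ _ (f.restrict hfK) fun x hx => hfA x hx)
    (mapQ _ _ (g.restrict hgK) fun y hy => hgA y hy)
    (by ext y; exact (Quotient.eq _).2 (hfg y y.2))
    (by ext x; exact (Quotient.eq _).2 (hgf x x.2))

end Submodule

namespace Thickening

variable {mX mZ n ℓ : ℕ}

def edgeLo (j : Fin (ℓ - 1)) : Fin ℓ := ⟨j, by omega⟩

def edgeHi (j : Fin (ℓ - 1)) : Fin ℓ := ⟨j + 1, by omega⟩

theorem edge_induction [NeZero ℓ] {P : Fin ℓ → Prop} (zero : P 0)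
    (step : ∀ j, P (edgeLo j) → P (edgeHi j)) (σ : Fin ℓ) : P σ := by
  obtain ⟨k, hk⟩ := σ
  induction k with
  | zero => exact zero
  | succ k ih => exact step ⟨k, by omega⟩ (ih (by omega))

theorem sum_repH_mul (j : Fin (ℓ - 1)) (f : Fin ℓ → ZMod 2) :
    ∑ τ, repH ℓ j τ * f τ = f (edgeLo j) + f (edgeHi j) := by
  have hrep : ∀ τ, repH ℓ j τ * f τ =
      (if τ = edgeLo j then f τ else 0) + (if τ = edgeHi j then f τ else 0) := by
    intro τ
    simp only [repH, of_apply, Fin.ext_iff, edgeLo, edgeHi]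
    split_ifs <;> first | omega | simp
  simp only [hrep, Finset.sum_add_distrib, Finset.sum_ite_eq', Finset.mem_univ, if_true]

variable (HX : Matrix (Fin mX) (Fin n) (ZMod 2)) (HZ : Matrix (Fin mZ) (Fin n) (ZMod 2))

theorem vecMul_thickHX_inl (c : Fin mX × Fin ℓ → ZMod 2) (i : Fin n) (σ : Fin ℓ) :
    (c ᵥ* thickHX HX ℓ) (.inl (i, σ)) = ((fun a => c (a, σ)) ᵥ* HX) i := by
  simp [vecMul, dotProduct, thickHX, Fintype.sum_prod_type, one_apply]

theorem vecMul_thickHX_inr (c : Fin mX × Fin ℓ → ZMod 2) (b : Fin mX) (j : Fin (ℓ - 1)) :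
    (c ᵥ* thickHX HX ℓ) (.inr (b, j)) = c (b, edgeLo j) + c (b, edgeHi j) := by
  simpa [vecMul, dotProduct, thickHX, Fintype.sum_prod_type, one_apply, mul_comm]
    using sum_repH_mul j fun τ => c (b, τ)

theorem thickHZ_mulVec_inl (v : (Fin n × Fin ℓ) ⊕ (Fin mX × Fin (ℓ - 1)) → ZMod 2)
    (c : Fin mZ) (τ : Fin ℓ) :
    (thickHZ HX HZ ℓ *ᵥ v) (.inl (c, τ)) = (HZ *ᵥ sheet τ v) c := by
  simp [mulVec, dotProduct, thickHZ, Fintype.sum_prod_type, one_apply, sheet]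

theorem thickHZ_mulVec_inr (v : (Fin n × Fin ℓ) ⊕ (Fin mX × Fin (ℓ - 1)) → ZMod 2)
    (i : Fin n) (j : Fin (ℓ - 1)) :
    (thickHZ HX HZ ℓ *ᵥ v) (.inr (i, j)) =
      v (.inl (i, edgeLo j)) + v (.inl (i, edgeHi j)) + ((fun a => v (.inr (a, j))) ᵥ* HX) i := by
  simp [mulVec, vecMul, dotProduct, thickHZ, Fintype.sum_prod_type, one_apply, sum_repH_mul,
    mul_comm]

theorem thickHZ_mul_transpose_thickHX (hZX : HZ * HXᵀ = 0) :
    thickHZ HX HZ ℓ * (thickHX HX ℓ)ᵀ = 0 := by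
  -- By the mixed-product rule the lower block is `HXᵀ ⊗ h + HXᵀ ⊗ h`, which vanishes over `𝔽₂`.
  rw [thickHZ, thickHX, transpose_fromCols, fromBlocks_mul_fromRows, ← kroneckerMap_transpose,
    ← kroneckerMap_transpose, transpose_transpose, transpose_one, transpose_one,
    ← mul_kronecker_mul, ← mul_kronecker_mul, ← mul_kronecker_mul, hZX]
  simp only [Matrix.one_mul, Matrix.mul_one, Matrix.zero_mul, zero_kronecker,
    ZModModule.add_self, fromRows_zero]

variable (mX) in
def sheetₗ (τ : Fin ℓ) :
    ((Fin n × Fin ℓ) ⊕ (Fin mX × Fin (ℓ - 1)) → ZMod 2) →ₗ[ZMod 2] (Fin n → ZMod 2) :=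
  LinearMap.funLeft (ZMod 2) (ZMod 2) fun i => .inl (i, τ)

theorem sheetₗ_apply (τ : Fin ℓ) (v : (Fin n × Fin ℓ) ⊕ (Fin mX × Fin (ℓ - 1)) → ZMod 2) :
    sheetₗ mX τ v = sheet τ v :=
  rfl

variable (mX ℓ) in
def spread : (Fin n → ZMod 2) →ₗ[ZMod 2] ((Fin n × Fin ℓ) ⊕ (Fin mX × Fin (ℓ - 1)) → ZMod 2) where
  toFun w := Sum.elim (fun p => w p.1) 0
  map_add' _ _ := by ext (_ | _) <;> simp
  map_smul' _ _ := by ext (_ | _) <;> simp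

theorem sheet_spread (τ : Fin ℓ) (w : Fin n → ZMod 2) : sheet τ (spread mX ℓ w) = w :=
  rfl

theorem sheet_mem_ker {v : (Fin n × Fin ℓ) ⊕ (Fin mX × Fin (ℓ - 1)) → ZMod 2} (τ : Fin ℓ)
    (hv : v ∈ LinearMap.ker (thickHZ HX HZ ℓ).mulVecLin) :
    sheet τ v ∈ LinearMap.ker HZ.mulVecLin := by
  ext c
  simpa [thickHZ_mulVec_inl] using congrFun hv (.inl (c, τ))

theorem sheet_mem_rowSpace {v : (Fin n × Fin ℓ) ⊕ (Fin mX × Fin (ℓ - 1)) → ZMod 2} (τ : Fin ℓ)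
    (hv : v ∈ rowSpace (thickHX HX ℓ)) : sheet τ v ∈ rowSpace HX := by
  obtain ⟨c, rfl⟩ := mem_rowSpace_iff.1 hv
  exact mem_rowSpace_iff.2 ⟨fun a => c (a, τ), funext fun i => (vecMul_thickHX_inl HX c i τ).symm⟩

theorem spread_mem_ker {w : Fin n → ZMod 2} (hw : w ∈ LinearMap.ker HZ.mulVecLin) :
    spread mX ℓ w ∈ LinearMap.ker (thickHZ HX HZ ℓ).mulVecLin := by
  ext (⟨c, τ⟩ | ⟨i, j⟩)
  · simpa [thickHZ_mulVec_inl, sheet_spread] using congrFun hw c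
  · simp [thickHZ_mulVec_inr, spread, ZModModule.add_self, ← Pi.zero_def]

theorem spread_mem_rowSpace {w : Fin n → ZMod 2} (hw : w ∈ rowSpace HX) :
    spread mX ℓ w ∈ rowSpace (thickHX HX ℓ) := by
  obtain ⟨d, rfl⟩ := mem_rowSpace_iff.1 hw
  refine mem_rowSpace_iff.2 ⟨fun p => d p.1, ?_⟩
  ext (⟨i, σ⟩ | ⟨b, j⟩)
  · simp [vecMul_thickHX_inl, spread]
  · simp [vecMul_thickHX_inr, spread, ZModModule.add_self]

def rungPrefixSum (v : (Fin n × Fin ℓ) ⊕ (Fin mX × Fin (ℓ - 1)) → ZMod 2) :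
    Fin mX × Fin ℓ → ZMod 2 :=
  fun p => ∑ j : Fin (ℓ - 1) with edgeHi j ≤ p.2, v (.inr (p.1, j))

theorem rungPrefixSum_zero [NeZero ℓ] (v : (Fin n × Fin ℓ) ⊕ (Fin mX × Fin (ℓ - 1)) → ZMod 2)
    (a : Fin mX) : rungPrefixSum v (a, 0) = 0 := by
  refine Finset.sum_eq_zero fun j hj => absurd (Finset.mem_filter.1 hj).2 ?_
  simp [edgeHi]

theorem rungPrefixSum_edgeHi (v : (Fin n × Fin ℓ) ⊕ (Fin mX × Fin (ℓ - 1)) → ZMod 2)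
    (a : Fin mX) (j : Fin (ℓ - 1)) :
    rungPrefixSum v (a, edgeHi j) = rungPrefixSum v (a, edgeLo j) + v (.inr (a, j)) := by
  have hfilter : Finset.univ.filter (fun j' : Fin (ℓ - 1) => edgeHi j' ≤ edgeHi j) =
      insert j (Finset.univ.filter fun j' => edgeHi j' ≤ edgeLo j) := by
    ext j'
    simp only [Finset.mem_filter, Finset.mem_insert, Finset.mem_univ, true_and, Fin.ext_iff,
      Fin.le_def, edgeHi, edgeLo]
    omega
  simp only [rungPrefixSum]
  rw [hfilter, Finset.sum_insert (by simp [edgeHi, edgeLo, Fin.le_def]), add_comm]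

theorem vecMul_rungPrefixSum_thickHX [NeZero ℓ]
    {v : (Fin n × Fin ℓ) ⊕ (Fin mX × Fin (ℓ - 1)) → ZMod 2}
    (hv : v ∈ LinearMap.ker (thickHZ HX HZ ℓ).mulVecLin) :
    rungPrefixSum v ᵥ* thickHX HX ℓ = v + spread mX ℓ (sheet 0 v) := by
  ext (⟨i, σ⟩ | ⟨b, j⟩)
  · rw [vecMul_thickHX_inl]
    induction σ using edge_induction with
    | zero => simp [rungPrefixSum_zero, spread, sheet, ZModModule.add_self, ← Pi.zero_def]
    | step j ih =>
      have hrung : (fun a => rungPrefixSum v (a, edgeHi j)) =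
          (fun a => rungPrefixSum v (a, edgeLo j)) + fun a => v (.inr (a, j)) :=
        funext fun a => rungPrefixSum_edgeHi v a j
      have hker := congrFun hv (.inr (i, j))
      simp only [mulVecLin_apply, thickHZ_mulVec_inr, Pi.zero_apply] at hker
      rw [hrung, add_vecMul, Pi.add_apply, ih]
      simp only [spread, sheet, Pi.add_apply, LinearMap.coe_mk, AddHom.coe_mk, Sum.elim_inl]
      grind
  · simp [vecMul_thickHX_inr, rungPrefixSum_edgeHi, spread, ← add_assoc, ZModModule.add_self]

theorem add_spread_sheet_mem_rowSpace [NeZero ℓ]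
    {v : (Fin n × Fin ℓ) ⊕ (Fin mX × Fin (ℓ - 1)) → ZMod 2}
    (hv : v ∈ LinearMap.ker (thickHZ HX HZ ℓ).mulVecLin) :
    v + spread mX ℓ (sheet 0 v) ∈ rowSpace (thickHX HX ℓ) :=
  mem_rowSpace_iff.2 ⟨_, vecMul_rungPrefixSum_thickHX HX HZ hv⟩

end Thickening

theorem thickening_preserves_logical_qubits
    {mX mZ n : ℕ}
    (HX : Matrix (Fin mX) (Fin n) (ZMod 2))
    (HZ : Matrix (Fin mZ) (Fin n) (ZMod 2))
    (hCSS : HX * HZᵀ = 0)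
    (ℓ : ℕ) (hℓ : 1 ≤ ℓ) :
    rowSpace (thickHX HX ℓ) ≤ LinearMap.ker (thickHZ HX HZ ℓ).mulVecLin ∧
    rowSpace HX ≤ LinearMap.ker HZ.mulVecLin ∧
    Module.finrank (ZMod 2)
      (↥(LinearMap.ker (thickHZ HX HZ ℓ).mulVecLin) ⧸
        Submodule.comap (LinearMap.ker (thickHZ HX HZ ℓ).mulVecLin).subtype
          (rowSpace (thickHX HX ℓ))) =
    Module.finrank (ZMod 2)
      (↥(LinearMap.ker HZ.mulVecLin) ⧸
        Submodule.comap (LinearMap.ker HZ.mulVecLin).subtype (rowSpace HX)) := by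
  open Thickening in
  have : NeZero ℓ := NeZero.of_pos hℓ
  have hZX : HZ * HXᵀ = 0 := by simpa using congrArg transpose hCSS
  refine ⟨(rowSpace_le_ker_mulVecLin_iff _ _).2 (thickHZ_mul_transpose_thickHX HX HZ hZX),
    (rowSpace_le_ker_mulVecLin_iff _ _).2 hZX, LinearEquiv.finrank_eq ?_⟩
  refine Submodule.subquotientEquiv (sheetₗ mX 0) (spread mX ℓ)
    (fun _ => sheet_mem_ker HX HZ 0) (fun _ => sheet_mem_rowSpace HX 0)
    (fun _ => spread_mem_ker HX HZ) (fun _ => spread_mem_rowSpace HX) (fun v hv => ?_)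
    (fun w _ => by simp [sheetₗ_apply, sheet_spread])
  rw [ZModModule.sub_eq_add, add_comm]
  exact add_spread_sheet_mem_rowSpace HX HZ hv
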